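/- A holomorphic function f on the punctured disc D* with finite weighted L² norm ∫_{D*} (-log|z|²)^{k-2} |f(z)|² |z|^{-2} dA(z) < ∞ (for k ≥ 2) extends holomorphically to 0; equivalently, its Laurent expansion at 0 involves only terms z^j with j ≥ 1. -/

import Mathlib

/-!
Near `0` the weight `(-log |z|²)^(k-2)` is at least `1`, so `g z = f z / z` is square integrable
on a small punctured disc. The sub-mean-value property of `|g|²` on the disc of radius `|c|/2`
around `c` gives `|f c|² = |c|² |g c|² ≤ (4/π) ∫_{B(c, |c|/2)} |g|²`, which tends to `0` with `c`
by absolute continuity of the integral. Hence `f → 0` at `0`, and Riemann's removable singularity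
theorem extends `f` holomorphically by `0`.
-/

open MeasureTheory Metric Set Filter Topology Real
open scoped ENNReal

theorem norm_circleAverage_le {E : Type*} [NormedAddCommGroup E] [NormedSpace ℝ E]
    (f : ℂ → E) (c : ℂ) (R : ℝ) :
    ‖circleAverage f c R‖ ≤ circleAverage (fun z => ‖f z‖) c R := by
  rw [circleAverage_def, circleAverage_def, norm_smul, smul_eq_mul, norm_inv,
    Real.norm_of_nonneg two_pi_pos.le]
  gcongr
  exact intervalIntegral.norm_integral_le_integral_norm two_pi_pos.le

theorem sq_norm_le_circleAverage {f : ℂ → ℂ} {c : ℂ} {R : ℝ}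
    (hf : DiffContOnCl ℂ f (ball c |R|)) :
    ‖f c‖ ^ 2 ≤ circleAverage (fun z => ‖f z‖ ^ 2) c R := by
  have hmv : circleAverage (fun z => f z ^ 2) c R = f c ^ 2 :=
    ((differentiable_pow (𝕜 := ℂ) (𝔸 := ℂ) 2).comp_diffContOnCl hf).circleAverage
  calc ‖f c‖ ^ 2 = ‖circleAverage (fun z => f z ^ 2) c R‖ := by rw [hmv, norm_pow]
    _ ≤ circleAverage (fun z => ‖f z ^ 2‖) c R := norm_circleAverage_le _ c R
    _ = circleAverage (fun z => ‖f z‖ ^ 2) c R := by simp_rw [norm_pow]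

theorem integral_Ioo_circleMap_eq_circleAverage (u : ℂ → ℝ) (c : ℂ) (R : ℝ) :
    ∫ θ in Ioo (-π) π, u (circleMap c R θ) = 2 * π * circleAverage u c R := by
  rw [circleAverage_eq_integral_add (-π), smul_eq_mul, mul_inv_cancel_left₀ two_pi_pos.ne',
    intervalIntegral.integral_comp_add_right (fun θ => u (circleMap c R θ)),
    intervalIntegral.integral_of_le (by linarith [pi_pos]), integral_Ioc_eq_integral_Ioo]
  ring_nf

theorem add_polarCoord_symm_eq_circleMap (c : ℂ) (p : ℝ × ℝ) :
    c + Complex.polarCoord.symm p = circleMap c p.1 p.2 := by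
  rw [Complex.polarCoord_symm_apply, circleMap, Complex.exp_mul_I]
  push_cast
  ring

theorem lintegral_ball_eq_lintegral_circleMap {g : ℂ → ℝ≥0∞} {c : ℂ} {R : ℝ}
    (hg : ContinuousOn g (ball c R)) :
    ∫⁻ w in ball c R, g w =
      ∫⁻ r in Ioo 0 R, ENNReal.ofReal r * ∫⁻ θ in Ioo (-π) π, g (circleMap c r θ) := by
  classical
  have hG : Measurable ((ball c R).indicator g) := by
    rw [← piecewise_eq_indicator]
    exact hg.measurable_piecewise continuousOn_const measurableSet_ball
  set G : ℂ → ℝ≥0∞ := (ball c R).indicator g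
  have hmeas : Measurable fun p : ℝ × ℝ => ENNReal.ofReal p.1 * G (circleMap c p.1 p.2) :=
    measurable_fst.ennreal_ofReal.mul (hG.comp circleMap.continuous.measurable)
  calc ∫⁻ w in ball c R, g w = ∫⁻ w, G (c + w) := by
        rw [← lintegral_indicator measurableSet_ball, lintegral_add_left_eq_self]
    _ = ∫⁻ r in Ioi 0, ∫⁻ θ in Ioo (-π) π, ENNReal.ofReal r * G (circleMap c r θ) := by
        rw [← Complex.lintegral_comp_polarCoord_symm, polarCoord_target,
          Measure.volume_eq_prod, ← Measure.prod_restrict, ← lintegral_prod _ hmeas.aemeasurable]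
        simp only [add_polarCoord_symm_eq_circleMap, smul_eq_mul]
    _ = ∫⁻ r in Ioi 0, (Iio R).indicator
          (fun r => ENNReal.ofReal r * ∫⁻ θ in Ioo (-π) π, g (circleMap c r θ)) r := by
        refine setLIntegral_congr_fun measurableSet_Ioi fun r (hr : 0 < r) => ?_
        have hmem : ∀ θ, circleMap c r θ ∈ ball c R ↔ r ∈ Iio R := fun θ => by
          rw [mem_ball, dist_eq_norm, circleMap_sub_center, norm_circleMap_zero, abs_of_pos hr,
            mem_Iio]
        by_cases hrR : r ∈ Iio R
        · simp only [G, indicator_of_mem hrR, indicator_of_mem ((hmem _).2 hrR)]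
          exact lintegral_const_mul' _ _ ENNReal.ofReal_ne_top
        · simp [G, indicator_of_notMem hrR, indicator_of_notMem (mt (hmem _).1 hrR)]
    _ = _ := by
        rw [lintegral_indicator measurableSet_Iio, Measure.restrict_restrict measurableSet_Iio,
          Iio_inter_Ioi]

theorem mul_sq_norm_le_setIntegral_ball {f : ℂ → ℂ} {c : ℂ} {R : ℝ} (hR : 0 < R)
    (hf : DifferentiableOn ℂ f (closedBall c R)) :
    π * R ^ 2 * ‖f c‖ ^ 2 ≤ ∫ w in ball c R, ‖f w‖ ^ 2 := by
  have hu : ContinuousOn (fun w => ‖f w‖ ^ 2) (closedBall c R) := hf.continuousOn.norm.pow 2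
  have hu_int : IntegrableOn (fun w => ‖f w‖ ^ 2) (ball c R) :=
    (hu.integrableOn_compact (isCompact_closedBall c R)).mono_set ball_subset_closedBall
  have hcircle : ∀ r ∈ Ioo 0 R, ENNReal.ofReal (2 * π * ‖f c‖ ^ 2) ≤
      ∫⁻ θ in Ioo (-π) π, ENNReal.ofReal (‖f (circleMap c r θ)‖ ^ 2) := by
    intro r hr
    have hsub : closedBall c r ⊆ closedBall c R := closedBall_subset_closedBall hr.2.le
    have hcont : Continuous fun θ => ‖f (circleMap c r θ)‖ ^ 2 :=
      hu.comp_continuous (continuous_circleMap c r)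
        fun θ => hsub (circleMap_mem_closedBall c hr.1.le θ)
    rw [← ofReal_integral_eq_lintegral_ofReal (hcont.integrableOn_Icc.mono_set Ioo_subset_Icc_self)
        (ae_of_all _ fun _ => by positivity),
      integral_Ioo_circleMap_eq_circleAverage (fun w => ‖f w‖ ^ 2)]
    gcongr
    refine sq_norm_le_circleAverage (hf.mono hsub |>.diffContOnCl_ball ?_)
    rw [abs_of_pos hr.1]
  have hlin : ∫⁻ r in Ioo 0 R, ENNReal.ofReal r = ENNReal.ofReal (R ^ 2 / 2) := by
    rw [← ofReal_integral_eq_lintegral_ofReal (f := fun r => r)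
        ((continuous_id.integrableOn_Icc (a := 0) (b := R)).mono_set Ioo_subset_Icc_self)
        ((ae_restrict_iff' measurableSet_Ioo).2 (ae_of_all _ fun r hr => hr.1.le)),
      ← integral_Ioc_eq_integral_Ioo, ← intervalIntegral.integral_of_le hR.le, integral_id]
    ring_nf
  rw [← ENNReal.ofReal_le_ofReal_iff
      (setIntegral_nonneg measurableSet_ball fun _ _ => by positivity),
    ofReal_integral_eq_lintegral_ofReal hu_int (ae_of_all _ fun _ => by positivity),
    lintegral_ball_eq_lintegral_circleMap (g := fun w => ENNReal.ofReal (‖f w‖ ^ 2))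
      (ENNReal.continuous_ofReal.comp_continuousOn (hu.mono ball_subset_closedBall))]
  calc ENNReal.ofReal (π * R ^ 2 * ‖f c‖ ^ 2)
      = ∫⁻ r in Ioo 0 R, ENNReal.ofReal r * ENNReal.ofReal (2 * π * ‖f c‖ ^ 2) := by
        rw [lintegral_mul_const _ ENNReal.measurable_ofReal, hlin,
          ← ENNReal.ofReal_mul (by positivity)]
        ring_nf
    _ ≤ _ := setLIntegral_mono' measurableSet_Ioo fun r hr => by gcongr; exact hcircle r hr

theorem closedBall_half_norm_subset_punctured_ball {E : Type*} [NormedAddCommGroup E] {c : E}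
    {ρ : ℝ} (hc : c ≠ 0) (hcρ : 3 * ‖c‖ / 2 < ρ) : closedBall c (‖c‖ / 2) ⊆ ball 0 ρ \ {0} := by
  intro w hw
  rw [mem_closedBall, dist_eq_norm] at hw
  have hc0 := norm_pos_iff.2 hc
  have h₁ := norm_sub_norm_le w c
  have h₂ := norm_sub_norm_le c w
  rw [norm_sub_rev] at h₂
  refine ⟨mem_ball_zero_iff.2 (by linarith), fun hw0 => ?_⟩
  rw [mem_singleton_iff.1 hw0, zero_sub, norm_neg] at hw
  linarith

theorem tendsto_volume_ball_half_norm :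
    Tendsto (fun c : ℂ => volume (ball c (‖c‖ / 2))) (𝓝 0) (𝓝 0) := by
  simp_rw [Complex.volume_ball]
  have h : Tendsto (fun c : ℂ => ENNReal.ofReal (‖c‖ / 2) ^ 2) (𝓝 0) (𝓝 0) := by
    have := ((ENNReal.continuous_pow 2).comp
      (ENNReal.continuous_ofReal.comp (continuous_norm.div_const 2))).tendsto (0 : ℂ)
    simpa [Function.comp_def] using this
  simpa using ENNReal.Tendsto.mul_const h (Or.inr ENNReal.coe_ne_top)

theorem tendsto_mul_nhdsNE_zero_of_integrableOn_sq_norm {g : ℂ → ℂ} {ρ : ℝ} (hρ : 0 < ρ)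
    (hg : DifferentiableOn ℂ g (ball 0 ρ \ {0}))
    (hint : IntegrableOn (fun z => ‖g z‖ ^ 2) (ball 0 ρ \ {0})) :
    Tendsto (fun z => z * g z) (𝓝[≠] 0) (𝓝 0) := by
  set S := ball (0 : ℂ) ρ \ {0}
  set I : ℂ → ℝ := fun c => ∫ w in ball c (‖c‖ / 2), ‖g w‖ ^ 2 ∂(volume.restrict S)
  have hsub : ∀ᶠ c in 𝓝[≠] (0 : ℂ), closedBall c (‖c‖ / 2) ⊆ S := by
    have hnear : ∀ᶠ c : ℂ in 𝓝 0, 3 * ‖c‖ / 2 < ρ :=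
      (((continuous_norm.const_mul 3).div_const 2).tendsto' 0 0 (by simp)).eventually
        (gt_mem_nhds hρ)
    filter_upwards [nhdsWithin_le_nhds hnear, self_mem_nhdsWithin] with c hcρ hc0
    exact closedBall_half_norm_subset_punctured_ball hc0 hcρ
  have hbound : ∀ᶠ c in 𝓝[≠] 0, ‖c * g c‖ ^ 2 ≤ 4 / π * I c := by
    filter_upwards [hsub, self_mem_nhdsWithin] with c hc hc0
    have hmv := mul_sq_norm_le_setIntegral_ball (half_pos (norm_pos_iff.2 hc0)) (hg.mono hc)
    simp only [I, Measure.restrict_restrict_of_subset (ball_subset_closedBall.trans hc)]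
    rw [div_mul_eq_mul_div, le_div_iff₀ pi_pos]
    have hscale : ‖c * g c‖ ^ 2 * π = 4 * (π * (‖c‖ / 2) ^ 2 * ‖g c‖ ^ 2) := by
      rw [norm_mul]; ring
    linarith
  have hI : Tendsto I (𝓝[≠] 0) (𝓝 0) :=
    hint.tendsto_setIntegral_nhds_zero <| tendsto_of_tendsto_of_tendsto_of_le_of_le
      tendsto_const_nhds (tendsto_volume_ball_half_norm.mono_left nhdsWithin_le_nhds)
      (fun _ => zero_le) fun _ => Measure.restrict_apply_le _ _
  have hsq : Tendsto (fun c => ‖c * g c‖ ^ 2) (𝓝[≠] 0) (𝓝 0) :=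
    squeeze_zero' (Eventually.of_forall fun _ => by positivity) hbound
      (by simpa using hI.const_mul (4 / π))
  rw [tendsto_zero_iff_norm_tendsto_zero]
  simpa only [Real.sqrt_sq (norm_nonneg _), Real.sqrt_zero] using hsq.sqrt

theorem differentiableOn_update_of_tendsto {E : Type*} [NormedAddCommGroup E] [NormedSpace ℂ E]
    [CompleteSpace E]
    {f : ℂ → E} {s : Set ℂ} {c : ℂ} {a : E} (hs : s ∈ 𝓝 c)
    (hf : DifferentiableOn ℂ f (s \ {c})) (ha : Tendsto f (𝓝[≠] c) (𝓝 a)) :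
    DifferentiableOn ℂ (Function.update f c a) s :=
  (Complex.differentiableOn_compl_singleton_and_continuousAt_iff hs).1
    ⟨hf.congr fun _ hz => Function.update_of_ne hz.2 _ _, continuousAt_update_same.2 ha⟩

theorem one_le_neg_log_sq {x : ℝ} (hx₀ : 0 < x) (hx : x ≤ exp (-1 / 2)) : 1 ≤ -log (x ^ 2) := by
  have : log x ≤ -1 / 2 := (log_le_iff_le_exp hx₀).2 hx
  rw [log_pow]
  push_cast
  linarith

theorem stmt5_general (k : ℕ) (f : ℂ → ℂ)
    (hf : DifferentiableOn ℂ f (Metric.ball (0 : ℂ) 1 \ {0}))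
    (hint : MeasureTheory.IntegrableOn
      (fun z : ℂ =>
        (-Real.log (‖z‖ ^ 2)) ^ (k - 2) * ‖f z‖ ^ 2 / ‖z‖ ^ 2)
      (Metric.ball (0 : ℂ) 1 \ {0})) :
    ∃ g : ℂ → ℂ, DifferentiableOn ℂ g (Metric.ball (0 : ℂ) 1) ∧ g 0 = 0 ∧
      ∀ z ∈ Metric.ball (0 : ℂ) 1 \ {0}, g z = f z := by
  set S := ball (0 : ℂ) (exp (-1 / 2)) \ {0}
  have hS : S ⊆ ball 0 1 \ {0} :=
    sdiff_subset_sdiff_left (ball_subset_ball (exp_le_one_iff.2 (by norm_num)))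
  have hg : DifferentiableOn ℂ (fun z => f z / z) S :=
    (hf.mono hS).div differentiableOn_id fun _ hz => hz.2
  have hS_meas : MeasurableSet S := (isOpen_ball.sdiff isClosed_singleton).measurableSet
  have hL2 : IntegrableOn (fun z => ‖f z / z‖ ^ 2) S := by
    refine (hint.mono_set hS).mono'
      ((hg.continuousOn.norm.pow 2).aestronglyMeasurable hS_meas) ?_
    refine (ae_restrict_iff' hS_meas).2 (ae_of_all _ fun z hz => ?_)
    have hz₀ : 0 < ‖z‖ := norm_pos_iff.2 hz.2
    have hweight : 1 ≤ (-log (‖z‖ ^ 2)) ^ (k - 2) :=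
      one_le_pow₀ (one_le_neg_log_sq hz₀ (mem_ball_zero_iff.1 hz.1).le)
    rw [norm_pow, norm_norm, norm_div, div_pow, mul_div_assoc]
    exact le_mul_of_one_le_left (by positivity) hweight
  have hlim : Tendsto f (𝓝[≠] 0) (𝓝 0) :=
    (tendsto_mul_nhdsNE_zero_of_integrableOn_sq_norm (exp_pos _) hg hL2).congr'
      (eventually_mem_nhdsWithin.mono fun z hz => mul_div_cancel₀ _ hz)
  exact ⟨Function.update f 0 0,
    differentiableOn_update_of_tendsto (ball_mem_nhds 0 one_pos) hf hlim,
    Function.update_self .., fun z hz => Function.update_of_ne hz.2 _ _⟩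

/-- A holomorphic function on the punctured disc with finite weighted `L²` norm extends
holomorphically over `0`, vanishing there (only positive Laurent terms). -/
theorem stmt5 (k : ℕ) (hk : 2 ≤ k) (f : ℂ → ℂ)
    (hf : DifferentiableOn ℂ f (Metric.ball (0 : ℂ) 1 \ {0}))
    (hint : MeasureTheory.IntegrableOn
      (fun z : ℂ =>
        (-Real.log (‖z‖ ^ 2)) ^ (k - 2) * ‖f z‖ ^ 2 / ‖z‖ ^ 2)
      (Metric.ball (0 : ℂ) 1 \ {0})) :
    ∃ g : ℂ → ℂ, DifferentiableOn ℂ g (Metric.ball (0 : ℂ) 1) ∧ g 0 = 0 ∧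
      ∀ z ∈ Metric.ball (0 : ℂ) 1 \ {0}, g z = f z :=
  stmt5_general k f hf hint
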